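/- Under the uplink model, for every matrix P ∈ ℂ^{B×B}, the mean squared error between the transformed receive signal and the jammer-free signal admits the deterministic decomposition E[‖P y − (H s + n)‖²] = trace( (P − I_B) A (P − I_B)ᴴ ) + E_J ‖P h_J‖², where A := E_s H Hᴴ + N_0 I_B (and the trace is a nonnegative real number). -/

import Mathlib

/-!
The error is `(P - 1) H s + (P - 1) n + s_J • P h_J`. Its three terms are pairwise orthogonal in
`L²`, since the sources are independent and `s`, `n` are centred, so the mean squared error splits
into three second moments. For a linear image `M X` the second moment is `tr (M E[X Xᴴ] Mᴴ)`, which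
for the white sources `s`, `n` adds up to `tr ((P - 1) A (P - 1)ᴴ)`; this trace is a nonnegative
real because `A` is positive semidefinite.
-/

open MeasureTheory ProbabilityTheory Matrix
open scoped ComplexOrder

noncomputable def vecNormSq {m : Type*} [Fintype m] (v : m → ℂ) : ℝ := ∑ i, ‖v i‖ ^ 2

open ComplexConjugate

section SecondMoments

variable {Ω : Type*} [MeasurableSpace Ω] {μ : Measure Ω} {ι κ : Type*}

variable (μ) in
noncomputable def secondMoment (X : Ω → ι → ℂ) : Matrix ι ι ℂ :=
  Matrix.of fun i j => ∫ ω, X ω i * conj (X ω j) ∂μ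

lemma secondMoment_eq_smul_one [DecidableEq ι] {X : Ω → ι → ℂ} {σ : ℂ}
    (hX : ∀ i j, ∫ ω, X ω i * conj (X ω j) ∂μ = if i = j then σ else 0) :
    secondMoment μ X = σ • 1 := by
  ext i j
  simp [secondMoment, hX, one_apply]

lemma MeasureTheory.MemLp.integrable_mul_conj {f g : Ω → ℂ} (hf : MemLp f 2 μ)
    (hg : MemLp g 2 μ) : Integrable (fun ω => f ω * conj (g ω)) μ :=
  hf.integrable_mul hg.star

lemma ProbabilityTheory.IndepFun.integral_comp_mul_conj_comp_eq_zero {α β : Type*}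
    [MeasurableSpace α] [MeasurableSpace β] {X : Ω → α} {Y : Ω → β} (h : IndepFun X Y μ)
    (hX : AEMeasurable X μ) (hY : AEMeasurable Y μ) {f : α → ℂ} {g : β → ℂ}
    (hf : Measurable f) (hg : Measurable g) (hf0 : ∫ ω, f (X ω) ∂μ = 0) :
    ∫ ω, f (X ω) * conj (g (Y ω)) ∂μ = 0 := by
  calc ∫ ω, f (X ω) * conj (g (Y ω)) ∂μ = (∫ ω, f (X ω) ∂μ) * ∫ ω, conj (g (Y ω)) ∂μ :=
        h.integral_fun_comp_mul_comp hX hY hf.aestronglyMeasurable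
          (Complex.continuous_conj.measurable.comp hg).aestronglyMeasurable
    _ = 0 := by rw [hf0, zero_mul]

lemma integral_norm_add_sq_of_integral_mul_conj_eq_zero {f g : Ω → ℂ} (hf : MemLp f 2 μ)
    (hg : MemLp g 2 μ) (hfg : ∫ ω, f ω * conj (g ω) ∂μ = 0) :
    ∫ ω, ‖f ω + g ω‖ ^ 2 ∂μ = ∫ ω, ‖f ω‖ ^ 2 ∂μ + ∫ ω, ‖g ω‖ ^ 2 ∂μ := by
  have hfg_int := hf.integrable_mul_conj hg
  have hf2 := hf.integrable_norm_pow two_ne_zero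
  have hg2 := hg.integrable_norm_pow two_ne_zero
  have hpt : ∀ ω, ‖f ω + g ω‖ ^ 2 = ‖f ω‖ ^ 2 + ‖g ω‖ ^ 2 + 2 * (f ω * conj (g ω)).re := by
    intro ω
    simp only [← Complex.normSq_eq_norm_sq, Complex.normSq_add]
  have hre : ∫ ω, (f ω * conj (g ω)).re ∂μ = 0 := by
    have h := integral_re hfg_int
    rw [hfg] at h
    exact h
  have hsum : Integrable (fun ω => ‖f ω‖ ^ 2 + ‖g ω‖ ^ 2) μ := hf2.add hg2
  have hcross : Integrable (fun ω => 2 * (f ω * conj (g ω)).re) μ := hfg_int.re.const_mul 2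
  simp_rw [hpt]
  rw [integral_add hsum hcross, integral_add hf2 hg2, integral_const_mul, hre, mul_zero, add_zero]

variable [Fintype ι]

lemma MeasureTheory.MemLp.mulVec [Fintype κ] {p : ENNReal} {X : Ω → ι → ℂ} (hX : MemLp X p μ)
    (M : Matrix κ ι ℂ) : MemLp (fun ω => M *ᵥ X ω) p μ :=
  (LinearMap.toContinuousLinearMap (Matrix.mulVecLin M)).comp_memLp' hX

lemma integral_vecNormSq_add {X Y : Ω → ι → ℂ} (hX : MemLp X 2 μ) (hY : MemLp Y 2 μ)
    (hXY : ∀ i, ∫ ω, X ω i * conj (Y ω i) ∂μ = 0) :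
    ∫ ω, vecNormSq (X ω + Y ω) ∂μ = ∫ ω, vecNormSq (X ω) ∂μ + ∫ ω, vecNormSq (Y ω) ∂μ := by
  simp only [vecNormSq, Pi.add_apply]
  rw [integral_finsetSum (f := fun i ω => ‖X ω i + Y ω i‖ ^ 2) _
      fun i _ => ((hX.add hY).eval i).integrable_norm_pow two_ne_zero,
    integral_finsetSum _ fun i _ => (hX.eval i).integrable_norm_pow two_ne_zero,
    integral_finsetSum _ fun i _ => (hY.eval i).integrable_norm_pow two_ne_zero,
    ← Finset.sum_add_distrib]
  exact Finset.sum_congr rfl fun i _ =>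
    integral_norm_add_sq_of_integral_mul_conj_eq_zero (hX.eval i) (hY.eval i) (hXY i)

lemma integral_vecNormSq_add_add {X Y Z : Ω → ι → ℂ} (hX : MemLp X 2 μ) (hY : MemLp Y 2 μ)
    (hZ : MemLp Z 2 μ) (hXY : ∀ i, ∫ ω, X ω i * conj (Y ω i) ∂μ = 0)
    (hXZ : ∀ i, ∫ ω, X ω i * conj (Z ω i) ∂μ = 0) (hYZ : ∀ i, ∫ ω, Y ω i * conj (Z ω i) ∂μ = 0) :
    ∫ ω, vecNormSq (X ω + Y ω + Z ω) ∂μ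
      = ∫ ω, vecNormSq (X ω) ∂μ + ∫ ω, vecNormSq (Y ω) ∂μ + ∫ ω, vecNormSq (Z ω) ∂μ := by
  have hXY_Z : ∀ i, ∫ ω, (X ω + Y ω) i * conj (Z ω i) ∂μ = 0 := fun i => by
    simp only [Pi.add_apply, add_mul]
    rw [integral_add ((hX.eval i).integrable_mul_conj (hZ.eval i))
      ((hY.eval i).integrable_mul_conj (hZ.eval i)), hXZ, hYZ, add_zero]
  rw [integral_vecNormSq_add (X := fun ω => X ω + Y ω) (hX.add hY) hZ hXY_Z,
    integral_vecNormSq_add hX hY hXY]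

lemma integral_vecNormSq_eq_re_trace_secondMoment {X : Ω → ι → ℂ} (hX : MemLp X 2 μ) :
    ∫ ω, vecNormSq (X ω) ∂μ = (secondMoment μ X).trace.re := by
  simp only [vecNormSq, trace, diag, secondMoment, of_apply, Complex.re_sum]
  rw [integral_finsetSum _ fun i _ => (hX.eval i).integrable_norm_pow two_ne_zero]
  refine Finset.sum_congr rfl fun i _ => ?_
  simp_rw [Complex.mul_conj, Complex.normSq_eq_norm_sq]
  rw [integral_complex_ofReal, Complex.ofReal_re]

lemma secondMoment_mulVec {X : Ω → ι → ℂ} (hX : MemLp X 2 μ) (M : Matrix κ ι ℂ) :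
    secondMoment μ (fun ω => M *ᵥ X ω) = M * secondMoment μ X * Mᴴ := by
  ext i j
  have hpt : ∀ ω, (M *ᵥ X ω) i * conj ((M *ᵥ X ω) j)
      = ∑ v, ∑ u, (M i u * conj (M j v)) * (X ω u * conj (X ω v)) := by
    intro ω
    simp only [mulVec, dotProduct, map_sum, map_mul, Finset.sum_mul_sum]
    rw [Finset.sum_comm]
    exact Finset.sum_congr rfl fun _ _ => Finset.sum_congr rfl fun _ _ => by ring
  have hint : ∀ u v, Integrable (fun ω => X ω u * conj (X ω v)) μ := fun u v =>
    (hX.eval u).integrable_mul_conj (hX.eval v)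
  simp only [secondMoment, of_apply, hpt, mul_apply, conjTranspose_apply, Finset.sum_mul]
  rw [integral_finsetSum _ fun v _ => integrable_finsetSum _ fun u _ => (hint u v).const_mul _]
  refine Finset.sum_congr rfl fun v _ => ?_
  rw [integral_finsetSum _ fun u _ => (hint u v).const_mul _]
  refine Finset.sum_congr rfl fun u _ => ?_
  rw [integral_const_mul, RCLike.star_def]
  ring

lemma integral_mulVec_apply_eq_zero {X : Ω → ι → ℂ} (hX : Integrable X μ)
    (hX0 : ∀ u, ∫ ω, X ω u ∂μ = 0) (M : Matrix κ ι ℂ) (i : κ) :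
    ∫ ω, (M *ᵥ X ω) i ∂μ = 0 := by
  simp only [mulVec, dotProduct]
  rw [integral_finsetSum _ fun u _ => (hX.eval u).const_mul _]
  simp [integral_const_mul, hX0]

lemma vecNormSq_smul (z : ℂ) (c : ι → ℂ) : vecNormSq (z • c) = ‖z‖ ^ 2 * vecNormSq c := by
  simp only [vecNormSq, Pi.smul_apply, smul_eq_mul, norm_mul, mul_pow, Finset.mul_sum]

lemma integral_vecNormSq_smul (Z : Ω → ℂ) (c : ι → ℂ) :
    ∫ ω, vecNormSq (Z ω • c) ∂μ = (∫ ω, ‖Z ω‖ ^ 2 ∂μ) * vecNormSq c := by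
  simp_rw [vecNormSq_smul, integral_mul_const]

lemma integral_vecNormSq_mulVec_add_mulVec_add_smul [IsFiniteMeasure μ] {κ' : Type*}
    [Fintype κ] [Fintype κ'] {X : Ω → κ → ℂ} {W : Ω → κ' → ℂ} {Z : Ω → ℂ}
    (hX : MemLp X 2 μ) (hW : MemLp W 2 μ) (hZ : MemLp Z 2 μ)
    (hXW : IndepFun X W μ) (hXZ : IndepFun X Z μ) (hWZ : IndepFun W Z μ)
    (hX0 : ∀ u, ∫ ω, X ω u ∂μ = 0) (hW0 : ∀ k, ∫ ω, W ω k ∂μ = 0)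
    (M : Matrix ι κ ℂ) (N : Matrix ι κ' ℂ) (c : ι → ℂ) :
    ∫ ω, vecNormSq (M *ᵥ X ω + N *ᵥ W ω + Z ω • c) ∂μ
      = (M * secondMoment μ X * Mᴴ).trace.re + (N * secondMoment μ W * Nᴴ).trace.re
        + (∫ ω, ‖Z ω‖ ^ 2 ∂μ) * vecNormSq c := by
  have hMX0 := integral_mulVec_apply_eq_zero (hX.integrable one_le_two) hX0 M
  have hNW0 := integral_mulVec_apply_eq_zero (hW.integrable one_le_two) hW0 N
  have hXW_orth : ∀ i, ∫ ω, (M *ᵥ X ω) i * conj ((N *ᵥ W ω) i) ∂μ = 0 := fun i =>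
    hXW.integral_comp_mul_conj_comp_eq_zero hX.aemeasurable hW.aemeasurable
      (f := fun v => (M *ᵥ v) i) (g := fun v => (N *ᵥ v) i) (by fun_prop) (by fun_prop) (hMX0 i)
  have hXZ_orth : ∀ i, ∫ ω, (M *ᵥ X ω) i * conj ((Z ω • c) i) ∂μ = 0 := fun i =>
    hXZ.integral_comp_mul_conj_comp_eq_zero hX.aemeasurable hZ.aemeasurable
      (f := fun v => (M *ᵥ v) i) (g := fun z => (z • c) i) (by fun_prop) (by fun_prop) (hMX0 i)
  have hWZ_orth : ∀ i, ∫ ω, (N *ᵥ W ω) i * conj ((Z ω • c) i) ∂μ = 0 := fun i =>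
    hWZ.integral_comp_mul_conj_comp_eq_zero hW.aemeasurable hZ.aemeasurable
      (f := fun v => (N *ᵥ v) i) (g := fun z => (z • c) i) (by fun_prop) (by fun_prop) (hNW0 i)
  rw [integral_vecNormSq_add_add (Z := fun ω => Z ω • c) (hX.mulVec M) (hW.mulVec N)
      (MemLp.of_eval fun i => hZ.mul_const (c i)) hXW_orth hXZ_orth hWZ_orth,
    integral_vecNormSq_eq_re_trace_secondMoment (hX.mulVec M),
    integral_vecNormSq_eq_re_trace_secondMoment (hW.mulVec N),
    secondMoment_mulVec hX, secondMoment_mulVec hW, integral_vecNormSq_smul]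

end SecondMoments

theorem stmt10_general
    {Ω : Type*} [MeasurableSpace Ω] (μ : Measure Ω) [IsProbabilityMeasure μ]
    (B U : ℕ)
    (H : Matrix (Fin B) (Fin U) ℂ) (hJ : Fin B → ℂ)
    (Es EJ N0 : ℝ) (hEs : 0 < Es) (hN0 : 0 < N0)
    (s : Ω → Fin U → ℂ) (sJ : Ω → ℂ) (n : Ω → Fin B → ℂ)
    (hindep : iIndep
      ![MeasurableSpace.comap s inferInstance,
        MeasurableSpace.comap sJ inferInstance,
        MeasurableSpace.comap n inferInstance] μ)
    (hs2 : MemLp s 2 μ) (hsJ2 : MemLp sJ 2 μ) (hn2 : MemLp n 2 μ)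
    (hsmean : ∀ i, ∫ ω, s ω i ∂μ = 0)
    (hnmean : ∀ i, ∫ ω, n ω i ∂μ = 0)
    (hscov : ∀ i j, ∫ ω, s ω i * (starRingEnd ℂ) (s ω j) ∂μ = if i = j then (Es : ℂ) else 0)
    (hsJvar : ∫ ω, ‖sJ ω‖ ^ 2 ∂μ = EJ)
    (hncov : ∀ i j, ∫ ω, n ω i * (starRingEnd ℂ) (n ω j) ∂μ = if i = j then (N0 : ℂ) else 0)
    (y : Ω → Fin B → ℂ) (hy : ∀ ω, y ω = H *ᵥ s ω + sJ ω • hJ + n ω)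
    (A : Matrix (Fin B) (Fin B) ℂ)
    (hA : A = (Es : ℂ) • (H * Hᴴ) + (N0 : ℂ) • (1 : Matrix (Fin B) (Fin B) ℂ)) :
    ∀ P : Matrix (Fin B) (Fin B) ℂ,
      (((P - 1) * A * (P - 1)ᴴ).trace).im = 0 ∧
      0 ≤ (((P - 1) * A * (P - 1)ᴴ).trace).re ∧
      ∫ ω, vecNormSq (P *ᵥ y ω - (H *ᵥ s ω + n ω)) ∂μ
        = (((P - 1) * A * (P - 1)ᴴ).trace).re + EJ * vecNormSq (P *ᵥ hJ) := by
  intro P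
  set Q := P - 1
  have hA_psd : A.PosSemidef := hA ▸
    ((posSemidef_self_mul_conjTranspose H).smul (by exact_mod_cast hEs.le)).add
      (PosSemidef.one.smul (by exact_mod_cast hN0.le))
  obtain ⟨htrace_re, htrace_im⟩ :=
    Complex.nonneg_iff.mp (hA_psd.mul_mul_conjTranspose_same Q).trace_nonneg
  refine ⟨htrace_im.symm, htrace_re, ?_⟩
  have herr : ∀ ω, P *ᵥ y ω - (H *ᵥ s ω + n ω)
      = (Q * H) *ᵥ s ω + Q *ᵥ n ω + sJ ω • (P *ᵥ hJ) := by
    intro ω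
    simp only [hy ω, Q, mulVec_add, sub_mulVec, one_mulVec, ← mulVec_mulVec, mulVec_smul]
    abel
  simp_rw [herr]
  rw [integral_vecNormSq_mulVec_add_mulVec_add_smul hs2 hn2 hsJ2
    (hindep.indep (show (0 : Fin 3) ≠ 2 by decide)) (hindep.indep (show (0 : Fin 3) ≠ 1 by decide))
    (hindep.indep (show (1 : Fin 3) ≠ 2 by decide)).symm hsmean hnmean,
    secondMoment_eq_smul_one hscov, secondMoment_eq_smul_one hncov, hsJvar, ← Complex.add_re, ← trace_add, hA, conjTranspose_mul]
  congr 4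
  simp only [Matrix.mul_add, Matrix.add_mul, Matrix.mul_smul, Matrix.smul_mul, Matrix.mul_one,
    Matrix.mul_assoc]

/-- for every `P`, the MSE to the jammer-free signal decomposes as
`trace((P − I) A (P − I)ᴴ) + E_J ‖P h_J‖²` with `A = E_s H Hᴴ + N_0 I_B`, the trace being a
nonnegative real number. -/
theorem stmt10
    {Ω : Type*} [MeasurableSpace Ω] (μ : Measure Ω) [IsProbabilityMeasure μ]
    (B U : ℕ) (hB : 0 < B) (hU : 0 < U)
    (H : Matrix (Fin B) (Fin U) ℂ) (hJ : Fin B → ℂ)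
    (Es EJ N0 : ℝ) (hEs : 0 < Es) (hEJ : 0 < EJ) (hN0 : 0 < N0)
    (s : Ω → Fin U → ℂ) (sJ : Ω → ℂ) (n : Ω → Fin B → ℂ)
    (hindep : iIndep
      ![MeasurableSpace.comap s inferInstance,
        MeasurableSpace.comap sJ inferInstance,
        MeasurableSpace.comap n inferInstance] μ)
    (hs2 : MemLp s 2 μ) (hsJ2 : MemLp sJ 2 μ) (hn2 : MemLp n 2 μ)
    (hsmean : ∀ i, ∫ ω, s ω i ∂μ = 0) (hsJmean : ∫ ω, sJ ω ∂μ = 0)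
    (hnmean : ∀ i, ∫ ω, n ω i ∂μ = 0)
    (hscov : ∀ i j, ∫ ω, s ω i * (starRingEnd ℂ) (s ω j) ∂μ = if i = j then (Es : ℂ) else 0)
    (hsJvar : ∫ ω, ‖sJ ω‖ ^ 2 ∂μ = EJ)
    (hncov : ∀ i j, ∫ ω, n ω i * (starRingEnd ℂ) (n ω j) ∂μ = if i = j then (N0 : ℂ) else 0)
    (y : Ω → Fin B → ℂ) (hy : ∀ ω, y ω = H *ᵥ s ω + sJ ω • hJ + n ω)
    (A : Matrix (Fin B) (Fin B) ℂ)
    (hA : A = (Es : ℂ) • (H * Hᴴ) + (N0 : ℂ) • (1 : Matrix (Fin B) (Fin B) ℂ)) :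
    ∀ P : Matrix (Fin B) (Fin B) ℂ,
      (((P - 1) * A * (P - 1)ᴴ).trace).im = 0 ∧
      0 ≤ (((P - 1) * A * (P - 1)ᴴ).trace).re ∧
      ∫ ω, vecNormSq (P *ᵥ y ω - (H *ᵥ s ω + n ω)) ∂μ
        = (((P - 1) * A * (P - 1)ᴴ).trace).re + EJ * vecNormSq (P *ᵥ hJ) :=
  stmt10_general μ B U H hJ Es EJ N0 hEs hN0 s sJ n hindep hs2 hsJ2 hn2 hsmean hnmean hscov hsJvar
    hncov y hy A hA
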